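/- For n, m ≥ 3 and l ≥ 1, the induced matching numbers of dumbbell graphs satisfy ν(C_n·P_{l+3}·C_m) = ν(C_n·P_l·C_m) + 1. -/

import Mathlib

open SimpleGraph

/-- `M` is an induced matching of the simple graph `G`: every element of `M` is an
edge of `G`, and no edge of `G` joins (endpoints of) two distinct edges of `M`
(in particular the edges of `M` are pairwise disjoint). -/
def SimpleGraph.IsInducedMatching {V : Type*} (G : SimpleGraph V)
    (M : Finset (Sym2 V)) : Prop :=
  (∀ e ∈ M, e ∈ G.edgeSet) ∧
    ∀ e ∈ M, ∀ f ∈ M, e ≠ f → ∀ u ∈ e, ∀ v ∈ f, ¬ G.Adj u v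

/-- The induced matching number `ν(G)`: the maximum size of an induced matching. -/
noncomputable def SimpleGraph.inducedMatchingNumber {V : Type*} (G : SimpleGraph V) : ℕ :=
  sSup {k : ℕ | ∃ M : Finset (Sym2 V), G.IsInducedMatching M ∧ M.card = k}

/-- The graph obtained from `G` by deleting all vertices outside `A`
(keeping the ambient vertex type, deleted vertices become isolated). -/
def SimpleGraph.restrictTo {V : Type*} (G : SimpleGraph V) (A : Set V) : SimpleGraph V where
  Adj a b := G.Adj a b ∧ a ∈ A ∧ b ∈ A
  symm := ⟨fun a b h => ⟨h.1.symm, h.2.2, h.2.1⟩⟩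
  loopless := ⟨fun a h => G.loopless.irrefl a h.1⟩

/-- `Γ_G(S)`: the set of vertices of `G` at distance exactly one from the set `S`. -/
def SimpleGraph.gammaSet {V : Type*} (G : SimpleGraph V) (S : Set V) : Set V :=
  {v | v ∉ S ∧ ∃ u ∈ S, G.Adj v u}

/-- Label (in `ℕ`) of the `k`-th vertex (0-indexed) of the bridge path:
`z_1 = x_1 = 0` and `z_{k+1} = n + k - 1` for `k ≥ 1`. -/
def zVert (n : ℕ) (k : ℕ) : ℕ := if k = 0 then 0 else n + k - 1

/-- Label of the `j`-th vertex (0-indexed) of the second cycle `C_m`: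
`y_1 = z_l` and `y_{j+1} = n + l - 2 + j` for `j ≥ 1`. -/
def yVert (n l : ℕ) (j : ℕ) : ℕ := if j = 0 then zVert n (l - 1) else n + l - 2 + j

/-- The graph `C_n · P_l` on vertex labels in `ℕ`: a cycle on `0, …, n-1`
together with a path on `l` vertices attached at the vertex `0`. -/
def cyclePathGraph (n l : ℕ) : SimpleGraph ℕ :=
  SimpleGraph.fromRel (fun a b =>
    (∃ i < n, a = i ∧ b = (i + 1) % n) ∨
    (∃ k, k + 1 < l ∧ a = zVert n k ∧ b = zVert n (k + 1)))

/-- The dumbbell graph `C_n · P_l · C_m` on vertex labels in `ℕ`: cycles `C_n` and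
`C_m` joined by a path on `l` vertices, the endpoints of the path being identified
with one vertex of each cycle. Its vertices are `0, …, n + m + l - 3`. -/
def dumbbell (n l m : ℕ) : SimpleGraph ℕ :=
  SimpleGraph.fromRel (fun a b =>
    (∃ i < n, a = i ∧ b = (i + 1) % n) ∨
    (∃ k, k + 1 < l ∧ a = zVert n k ∧ b = zVert n (k + 1)) ∨
    (∃ j < m, a = yVert n l j ∧ b = yVert n l ((j + 1) % m)))

/-- `ξ₃(k) = 1` if `k ≡ 0, 1 (mod 3)`, and `ξ₃(k) = 0` if `k ≡ 2 (mod 3)`. -/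
def xi3 (k : ℕ) : ℕ := if k % 3 = 2 then 0 else 1

/-! Let `G'` arise from `G` by replacing a vertex `v` with a path `v p₁ p₂ p₃`, where `p₃` takes
over a set `B` of neighbours of `v`. An induced matching `M` of `G` gives one of `G'` with one more
edge: keep the image of `M` and add `p₁p₂` if `v` is unmatched, `p₂p₃` if `v` is matched outside
`B`, or replace the edge `vb` (`b ∈ B`) by `vp₁` and `p₃b`. Conversely, an induced matching of `G'`
loses at most one edge on the way back to `G`: at most one edge meets `p₁, p₂, p₃` unless both
`vp₁` and `p₃b` are present, and those two are replaced by `vb`; if `v` and a vertex of `B` are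
both matched, the edge at `v` is dropped. `C_n·P_{l+3}·C_m` arises in this way from `C_n·P_l·C_m`
at the vertex where the path leaves `C_n`. -/

theorem Finset.card_preimage_sym2Map {V W : Type*} {f : V → W} (hf : Function.Injective f)
    {M' : Finset (Sym2 W)} (hrange : ∀ e ∈ M', ∀ w ∈ e, w ∈ Set.range f) :
    (M'.preimage (Sym2.map f) (Sym2.map.injective hf).injOn).card = M'.card := by
  classical
  rw [Finset.card_preimage, Finset.filter_true_of_mem]
  intro e he
  induction e using Sym2.ind with
  | _ x y =>
    obtain ⟨a, rfl⟩ := hrange _ he x (Sym2.mem_mk_left x y)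
    obtain ⟨b, rfl⟩ := hrange _ he y (Sym2.mem_mk_right _ y)
    exact ⟨s(a, b), rfl⟩

namespace SimpleGraph

variable {V W : Type*}

section InducedMatching

variable {G : SimpleGraph V} {G' : SimpleGraph W}

namespace IsInducedMatching

variable {M N : Finset (Sym2 V)} {e e' : Sym2 V} {x y : V}

theorem subset (h : G.IsInducedMatching M) (hNM : N ⊆ M) : G.IsInducedMatching N :=
  ⟨fun e he => h.1 e (hNM he), fun e he e' he' => h.2 e (hNM he) e' (hNM he')⟩

theorem exists_adj_of_mem (h : G.IsInducedMatching M) (he : e ∈ M) (hx : x ∈ e) :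
    ∃ y, G.Adj x y ∧ e = s(x, y) := by
  obtain ⟨y, rfl⟩ := Sym2.mem_iff_exists.mp hx
  exact ⟨y, h.1 _ he, rfl⟩

theorem eq_of_adj (h : G.IsInducedMatching M) (he : e ∈ M) (he' : e' ∈ M) (hx : x ∈ e)
    (hy : y ∈ e') (hxy : G.Adj x y) : e = e' :=
  by_contra fun hne => h.2 e he e' he' hne x hx y hy hxy

theorem eq_of_mem (h : G.IsInducedMatching M) (he : e ∈ M) (he' : e' ∈ M) (hx : x ∈ e)
    (hx' : x ∈ e') : e = e' := by
  obtain ⟨y, hxy, rfl⟩ := h.exists_adj_of_mem he' hx'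
  exact h.eq_of_adj he he' hx (Sym2.mem_mk_right x y) hxy

theorem ne_and_not_adj_of_ne (h : G.IsInducedMatching M) (he : e ∈ M) (he' : e' ∈ M)
    (hne : e ≠ e') (hx : x ∈ e) (hy : y ∈ e') : x ≠ y ∧ ¬G.Adj x y :=
  ⟨fun hxy => hne (h.eq_of_mem he he' hx (hxy ▸ hy)), h.2 e he e' he' hne x hx y hy⟩

theorem insert [DecidableEq V] (h : G.IsInducedMatching M) {a b : V} (hab : G.Adj a b)
    (hfar : ∀ e ∈ M, ∀ w ∈ e, ¬G.Adj a w ∧ ¬G.Adj b w) :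
    G.IsInducedMatching (Insert.insert s(a, b) M) := by
  have hfar' : ∀ e ∈ M, ∀ w ∈ e, ∀ u ∈ s(a, b), ¬G.Adj u w := by
    intro e he w hw u hu
    rcases Sym2.mem_iff.mp hu with rfl | rfl
    exacts [(hfar e he w hw).1, (hfar e he w hw).2]
  refine ⟨?_, ?_⟩
  · intro e he
    rcases Finset.mem_insert.mp he with rfl | he
    exacts [hab, h.1 e he]
  · intro e₁ he₁ e₂ he₂ hne u hu w hw
    rcases Finset.mem_insert.mp he₁ with rfl | he₁ <;>
      rcases Finset.mem_insert.mp he₂ with rfl | he₂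
    · exact absurd rfl hne
    · exact hfar' e₂ he₂ w hw u hu
    · exact fun huw => hfar' e₁ he₁ u hu w hw huw.symm
    · exact h.2 e₁ he₁ e₂ he₂ hne u hu w hw

theorem card_insert [DecidableEq V] {a b : V} (hab : G.Adj a b)
    (hfar : ∀ e ∈ M, ∀ w ∈ e, ¬G.Adj a w ∧ ¬G.Adj b w) :
    (Insert.insert s(a, b) M).card = M.card + 1 :=
  Finset.card_insert_of_notMem fun hmem => (hfar _ hmem b (Sym2.mem_mk_right a b)).1 hab

theorem image [DecidableEq W] {f : V → W} (h : G.IsInducedMatching M)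
    (hedge : ∀ a b, s(a, b) ∈ M → G'.Adj (f a) (f b))
    (hrefl : ∀ a b, G'.Adj (f a) (f b) → G.Adj a b) :
    G'.IsInducedMatching (M.image (Sym2.map f)) := by
  refine ⟨?_, ?_⟩
  · intro e he
    obtain ⟨d, hd, rfl⟩ := Finset.mem_image.mp he
    induction d using Sym2.ind with | _ a b => exact hedge a b hd
  · intro e₁ he₁ e₂ he₂ hne u hu w hw huw
    obtain ⟨d₁, hd₁, rfl⟩ := Finset.mem_image.mp he₁
    obtain ⟨d₂, hd₂, rfl⟩ := Finset.mem_image.mp he₂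
    obtain ⟨a, ha, rfl⟩ := Sym2.mem_map.mp hu
    obtain ⟨b, hb, rfl⟩ := Sym2.mem_map.mp hw
    exact h.2 d₁ hd₁ d₂ hd₂ (fun hd => hne (hd ▸ rfl)) a ha b hb (hrefl a b huw)

theorem preimage {f : V → W} (hf : Function.Injective f) {M' : Finset (Sym2 W)}
    (h : G'.IsInducedMatching M') (hrefl : ∀ a b, G'.Adj (f a) (f b) → G.Adj a b)
    (hsep : ∀ e ∈ M', ∀ e' ∈ M', e ≠ e' → ∀ a b, f a ∈ e → f b ∈ e' → G.Adj a b →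
      G'.Adj (f a) (f b)) :
    G.IsInducedMatching (M'.preimage (Sym2.map f) (Sym2.map.injective hf).injOn) := by
  refine ⟨?_, ?_⟩
  · intro e he
    induction e using Sym2.ind with | _ a b => exact hrefl a b (h.1 _ (Finset.mem_preimage.mp he))
  · intro e₁ he₁ e₂ he₂ hne a ha b hb hab
    have hne' : Sym2.map f e₁ ≠ Sym2.map f e₂ := fun heq => hne (Sym2.map.injective hf heq)
    exact h.2 _ (Finset.mem_preimage.mp he₁) _ (Finset.mem_preimage.mp he₂) hne' (f a)
      (Sym2.mem_map.mpr ⟨a, ha, rfl⟩) (f b) (Sym2.mem_map.mpr ⟨b, hb, rfl⟩)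
      (hsep _ (Finset.mem_preimage.mp he₁) _ (Finset.mem_preimage.mp he₂) hne' a b
        (Sym2.mem_map.mpr ⟨a, ha, rfl⟩) (Sym2.mem_map.mpr ⟨b, hb, rfl⟩) hab)

end IsInducedMatching

theorem bddAbove_inducedMatching_card (hG : G.edgeSet.Finite) :
    BddAbove {k | ∃ M, G.IsInducedMatching M ∧ M.card = k} := by
  refine ⟨hG.toFinset.card, ?_⟩
  rintro _ ⟨M, hM, rfl⟩
  exact Finset.card_le_card fun e he => hG.mem_toFinset.mpr (hM.1 e he)

theorem IsInducedMatching.card_le_inducedMatchingNumber (hG : G.edgeSet.Finite)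
    {M : Finset (Sym2 V)} (h : G.IsInducedMatching M) : M.card ≤ G.inducedMatchingNumber :=
  le_csSup (bddAbove_inducedMatching_card hG) ⟨M, h, rfl⟩

theorem exists_isInducedMatching_card_eq (hG : G.edgeSet.Finite) :
    ∃ M, G.IsInducedMatching M ∧ M.card = G.inducedMatchingNumber :=
  Nat.sSup_mem (s := {k | ∃ M, G.IsInducedMatching M ∧ M.card = k})
    ⟨0, ∅, ⟨by simp, by simp⟩, rfl⟩ (bddAbove_inducedMatching_card hG)

end InducedMatching

/-- `G'` arises from `G` by stretching `v` into the path `v p₁ p₂ p₃`, the new end `p₃` taking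
over the neighbours `B` of `v`; `f` embeds the old vertices. For `B = {b}` this subdivides the
edge `vb` three times. -/
structure IsVertexStretch (G : SimpleGraph V) (G' : SimpleGraph W) (f : V → W) (v : V)
    (B : Set V) (p₁ p₂ p₃ : W) : Prop where
  injective : Function.Injective f
  apply_ne_p₁ : ∀ a, f a ≠ p₁
  apply_ne_p₂ : ∀ a, f a ≠ p₂
  apply_ne_p₃ : ∀ a, f a ≠ p₃
  mem_range : ∀ w, w ≠ p₁ → w ≠ p₂ → w ≠ p₃ → w ∈ Set.range f
  adj_of_mem : ∀ b ∈ B, G.Adj v b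
  adj_apply_iff : ∀ a b, G'.Adj (f a) (f b) ↔ G.Adj a b ∧ ¬(a = v ∧ b ∈ B) ∧ ¬(b = v ∧ a ∈ B)
  adj_p₁_iff : ∀ w, G'.Adj p₁ w ↔ w = f v ∨ w = p₂
  adj_p₂_iff : ∀ w, G'.Adj p₂ w ↔ w = p₁ ∨ w = p₃
  adj_p₃_iff : ∀ w, G'.Adj p₃ w ↔ w = p₂ ∨ ∃ b ∈ B, w = f b

namespace IsVertexStretch

variable {G : SimpleGraph V} {G' : SimpleGraph W} {f : V → W} {v : V} {B : Set V}
  {p₁ p₂ p₃ : W} {M : Finset (Sym2 V)} {M' : Finset (Sym2 W)}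

theorem adj_apply_p₁ (hs : IsVertexStretch G G' f v B p₁ p₂ p₃) : G'.Adj (f v) p₁ :=
  ((hs.adj_p₁_iff _).2 (Or.inl rfl)).symm

theorem adj_p₁_p₂ (hs : IsVertexStretch G G' f v B p₁ p₂ p₃) : G'.Adj p₁ p₂ :=
  (hs.adj_p₁_iff _).2 (Or.inr rfl)

theorem adj_p₂_p₃ (hs : IsVertexStretch G G' f v B p₁ p₂ p₃) : G'.Adj p₂ p₃ :=
  (hs.adj_p₂_iff _).2 (Or.inr rfl)

theorem adj_p₃_apply (hs : IsVertexStretch G G' f v B p₁ p₂ p₃) {b : V} (hb : b ∈ B) :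
    G'.Adj p₃ (f b) :=
  (hs.adj_p₃_iff _).2 (Or.inr ⟨b, hb, rfl⟩)

theorem ne_of_mem (hs : IsVertexStretch G G' f v B p₁ p₂ p₃) {b : V} (hb : b ∈ B) : b ≠ v :=
  (hs.adj_of_mem b hb).ne'

theorem eq_of_adj_p₁_apply (hs : IsVertexStretch G G' f v B p₁ p₂ p₃) {a : V}
    (h : G'.Adj p₁ (f a)) : a = v :=
  ((hs.adj_p₁_iff _).1 h).elim (fun h => hs.injective h) (absurd · (hs.apply_ne_p₂ a))

theorem not_adj_p₂_apply (hs : IsVertexStretch G G' f v B p₁ p₂ p₃) (a : V) :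
    ¬G'.Adj p₂ (f a) := fun h =>
  ((hs.adj_p₂_iff _).1 h).elim (hs.apply_ne_p₁ a) (hs.apply_ne_p₃ a)

theorem mem_of_adj_p₃_apply (hs : IsVertexStretch G G' f v B p₁ p₂ p₃) {a : V}
    (h : G'.Adj p₃ (f a)) : a ∈ B := by
  obtain h | ⟨b, hb, hab⟩ := (hs.adj_p₃_iff _).1 h
  · exact absurd h (hs.apply_ne_p₂ a)
  · exact hs.injective hab ▸ hb

theorem isInducedMatching_image [DecidableEq W] (hs : IsVertexStretch G G' f v B p₁ p₂ p₃)
    (h : G.IsInducedMatching M) (hM : ∀ b ∈ B, s(v, b) ∉ M) :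
    G'.IsInducedMatching (M.image (Sym2.map f)) := by
  refine h.image (fun a b hab => (hs.adj_apply_iff a b).2 ⟨h.1 _ hab, ?_, ?_⟩)
    (fun a b hab => ((hs.adj_apply_iff a b).1 hab).1)
  · rintro ⟨rfl, hb⟩
    exact hM b hb hab
  · rintro ⟨rfl, ha⟩
    exact hM a ha (Sym2.eq_swap ▸ hab)

theorem exists_card_eq_add_one_of_mem (hs : IsVertexStretch G G' f v B p₁ p₂ p₃)
    (h : G.IsInducedMatching M) {b : V} (hb : b ∈ B) (hvb : s(v, b) ∈ M) :
    ∃ M' : Finset (Sym2 W), G'.IsInducedMatching M' ∧ M'.card = M.card + 1 := by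
  classical
  set R := (M.erase s(v, b)).image (Sym2.map f)
  have hfar : ∀ d ∈ M.erase s(v, b), ∀ x ∈ d, ∀ u ∈ s(v, b), u ≠ x ∧ ¬G.Adj u x :=
    fun d hd x hx u hu =>
      h.ne_and_not_adj_of_ne hvb (Finset.mem_of_mem_erase hd) (Finset.ne_of_mem_erase hd).symm hu hx
  have hR : G'.IsInducedMatching R :=
    hs.isInducedMatching_image (h.subset (Finset.erase_subset _ _)) fun _ _ hmem =>
      (hfar _ hmem v (Sym2.mem_mk_left _ _) v (Sym2.mem_mk_left _ _)).1 rfl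
  have hfar₁ : ∀ e ∈ R, ∀ w ∈ e, ¬G'.Adj (f v) w ∧ ¬G'.Adj p₁ w := by
    intro e he w hw
    obtain ⟨d, hd, rfl⟩ := Finset.mem_image.mp he
    obtain ⟨x, hx, rfl⟩ := Sym2.mem_map.mp hw
    obtain ⟨hvx, hvx'⟩ := hfar d hd x hx v (Sym2.mem_mk_left v b)
    exact ⟨fun hadj => hvx' ((hs.adj_apply_iff v x).1 hadj).1,
      fun hadj => hvx (hs.eq_of_adj_p₁_apply hadj).symm⟩
  have hfar₃ : ∀ e ∈ insert s(f v, p₁) R, ∀ w ∈ e, ¬G'.Adj p₃ w ∧ ¬G'.Adj (f b) w := by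
    intro e he w hw
    rcases Finset.mem_insert.mp he with rfl | he
    · rcases Sym2.mem_iff.mp hw with rfl | rfl
      · exact ⟨fun hadj => hs.ne_of_mem (hs.mem_of_adj_p₃_apply hadj) rfl,
          fun hadj => ((hs.adj_apply_iff b v).1 hadj).2.2 ⟨rfl, hb⟩⟩
      · refine ⟨fun hadj => ?_, fun hadj => hs.ne_of_mem hb (hs.eq_of_adj_p₁_apply hadj.symm)⟩
        obtain h₁ | ⟨b', -, hb'⟩ := (hs.adj_p₃_iff _).1 hadj
        exacts [hs.adj_p₁_p₂.ne h₁, hs.apply_ne_p₁ b' hb'.symm]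
    · obtain ⟨d, hd, rfl⟩ := Finset.mem_image.mp he
      obtain ⟨x, hx, rfl⟩ := Sym2.mem_map.mp hw
      exact ⟨fun hadj => (hfar d hd x hx v (Sym2.mem_mk_left v b)).2
          (hs.adj_of_mem x (hs.mem_of_adj_p₃_apply hadj)),
        fun hadj => (hfar d hd x hx b (Sym2.mem_mk_right v b)).2
          ((hs.adj_apply_iff b x).1 hadj).1⟩
  refine ⟨_, (hR.insert hs.adj_apply_p₁ hfar₁).insert (hs.adj_p₃_apply hb) hfar₃, ?_⟩
  rw [IsInducedMatching.card_insert (hs.adj_p₃_apply hb) hfar₃,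
    IsInducedMatching.card_insert hs.adj_apply_p₁ hfar₁,
    Finset.card_image_of_injective _ (Sym2.map.injective hs.injective),
    Finset.card_erase_add_one hvb]

theorem exists_card_eq_add_one_of_forall_not_mem (hs : IsVertexStretch G G' f v B p₁ p₂ p₃)
    (h : G.IsInducedMatching M) (hM : ∀ b ∈ B, s(v, b) ∉ M) :
    ∃ M' : Finset (Sym2 W), G'.IsInducedMatching M' ∧ M'.card = M.card + 1 := by
  classical
  have hR := hs.isInducedMatching_image h hM
  have hcard := Finset.card_image_of_injective M (Sym2.map.injective hs.injective)
  by_cases hv : ∃ e ∈ M, v ∈ e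
  · obtain ⟨e, he, hve⟩ := hv
    have hfar : ∀ e' ∈ M.image (Sym2.map f), ∀ w ∈ e', ¬G'.Adj p₂ w ∧ ¬G'.Adj p₃ w := by
      intro e' he' w hw
      obtain ⟨d, hd, rfl⟩ := Finset.mem_image.mp he'
      obtain ⟨x, hx, rfl⟩ := Sym2.mem_map.mp hw
      refine ⟨hs.not_adj_p₂_apply x, fun hadj => ?_⟩
      have hxB := hs.mem_of_adj_p₃_apply hadj
      obtain rfl := h.eq_of_adj hd he hx hve (hs.adj_of_mem x hxB).symm
      obtain ⟨y, -, rfl⟩ := h.exists_adj_of_mem hd hve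
      rcases Sym2.mem_iff.mp hx with rfl | rfl
      exacts [hs.ne_of_mem hxB rfl, hM x hxB hd]
    exact ⟨_, hR.insert hs.adj_p₂_p₃ hfar,
      by rw [IsInducedMatching.card_insert hs.adj_p₂_p₃ hfar, hcard]⟩
  · have hfar : ∀ e' ∈ M.image (Sym2.map f), ∀ w ∈ e', ¬G'.Adj p₁ w ∧ ¬G'.Adj p₂ w := by
      intro e' he' w hw
      obtain ⟨d, hd, rfl⟩ := Finset.mem_image.mp he'
      obtain ⟨x, hx, rfl⟩ := Sym2.mem_map.mp hw
      exact ⟨fun hadj => hv ⟨d, hd, hs.eq_of_adj_p₁_apply hadj ▸ hx⟩, hs.not_adj_p₂_apply x⟩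
    exact ⟨_, hR.insert hs.adj_p₁_p₂ hfar,
      by rw [IsInducedMatching.card_insert hs.adj_p₁_p₂ hfar, hcard]⟩

theorem exists_card_eq_add_one (hs : IsVertexStretch G G' f v B p₁ p₂ p₃)
    (h : G.IsInducedMatching M) :
    ∃ M' : Finset (Sym2 W), G'.IsInducedMatching M' ∧ M'.card = M.card + 1 := by
  by_cases hM : ∃ b ∈ B, s(v, b) ∈ M
  · obtain ⟨b, hb, hvb⟩ := hM
    exact hs.exists_card_eq_add_one_of_mem h hb hvb
  · exact hs.exists_card_eq_add_one_of_forall_not_mem h fun b hb hvb => hM ⟨b, hb, hvb⟩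

theorem isInducedMatching_preimage (hs : IsVertexStretch G G' f v B p₁ p₂ p₃)
    (h' : G'.IsInducedMatching M')
    (hgood : ∀ e ∈ M', f v ∈ e → ∀ e' ∈ M', ∀ b ∈ B, f b ∉ e') :
    G.IsInducedMatching (M'.preimage (Sym2.map f) (Sym2.map.injective hs.injective).injOn) := by
  refine h'.preimage hs.injective (fun a b hab => ((hs.adj_apply_iff a b).1 hab).1) ?_
  intro e he e' he' _ a b ha hb hab
  refine (hs.adj_apply_iff a b).2 ⟨hab, ?_, ?_⟩
  · rintro ⟨rfl, hbB⟩
    exact hgood e he ha e' he' b hbB hb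
  · rintro ⟨rfl, haB⟩
    exact hgood e' he' hb e he a haB ha

theorem exists_card_eq_of_forall_not_mem (hs : IsVertexStretch G G' f v B p₁ p₂ p₃)
    (h' : G'.IsInducedMatching M') (hP : ∀ e ∈ M', p₁ ∉ e ∧ p₂ ∉ e ∧ p₃ ∉ e)
    (hgood : ∀ e ∈ M', f v ∈ e → ∀ e' ∈ M', ∀ b ∈ B, f b ∉ e') :
    ∃ N : Finset (Sym2 V), G.IsInducedMatching N ∧ N.card = M'.card ∧
      ∀ d ∈ N, d.map f ∈ M' := by
  refine ⟨_, hs.isInducedMatching_preimage h' hgood, Finset.card_preimage_sym2Map hs.injective ?_,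
    fun d hd => Finset.mem_preimage.mp hd⟩
  intro e he w hw
  obtain ⟨h₁, h₂, h₃⟩ := hP e he
  exact hs.mem_range w (ne_of_mem_of_not_mem hw h₁) (ne_of_mem_of_not_mem hw h₂)
    (ne_of_mem_of_not_mem hw h₃)

theorem exists_eq_mk_of_mem_p₃ (hs : IsVertexStretch G G' f v B p₁ p₂ p₃)
    (h' : G'.IsInducedMatching M') (h₁ : s(f v, p₁) ∈ M') {e : Sym2 W} (he : e ∈ M')
    (h₃ : p₃ ∈ e) : ∃ b ∈ B, e = s(p₃, f b) := by
  obtain ⟨w, hw, rfl⟩ := h'.exists_adj_of_mem he h₃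
  obtain rfl | ⟨b, hb, rfl⟩ := (hs.adj_p₃_iff w).1 hw
  · have := h'.eq_of_adj h₁ he (Sym2.mem_mk_right _ _) (Sym2.mem_mk_right _ _) hs.adj_p₁_p₂
    rcases Sym2.mem_iff.mp (this ▸ Sym2.mem_mk_left (f v) p₁) with h | h
    exacts [(hs.apply_ne_p₃ v h).elim, (hs.apply_ne_p₂ v h).elim]
  · exact ⟨b, hb, rfl⟩

theorem exists_card_le_add_one_of_mem_of_mem (hs : IsVertexStretch G G' f v B p₁ p₂ p₃)
    (h' : G'.IsInducedMatching M') (h₁ : s(f v, p₁) ∈ M') {b : V} (hb : b ∈ B)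
    (he₃ : s(p₃, f b) ∈ M') :
    ∃ N : Finset (Sym2 V), G.IsInducedMatching N ∧ M'.card ≤ N.card + 1 := by
  classical
  set R := (M'.erase s(f v, p₁)).erase s(p₃, f b)
  have hRM : R ⊆ M' := (Finset.erase_subset _ _).trans (Finset.erase_subset _ _)
  have far₁ : ∀ d ∈ R, ∀ w ∈ d, ∀ u ∈ s(f v, p₁), u ≠ w ∧ ¬G'.Adj u w := fun d hd w hw u hu =>
    h'.ne_and_not_adj_of_ne h₁ (hRM hd) (Finset.ne_of_mem_erase (Finset.mem_of_mem_erase hd)).symm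
      hu hw
  have far₃ : ∀ d ∈ R, ∀ w ∈ d, ∀ u ∈ s(p₃, f b), u ≠ w ∧ ¬G'.Adj u w := fun d hd w hw u hu =>
    h'.ne_and_not_adj_of_ne he₃ (hRM hd) (Finset.ne_of_mem_erase hd).symm hu hw
  obtain ⟨N, hN, hNcard, hNR⟩ := hs.exists_card_eq_of_forall_not_mem (h'.subset hRM)
    (fun d hd => ⟨fun h => (far₁ d hd _ h p₁ (Sym2.mem_mk_right _ _)).1 rfl,
      fun h => (far₁ d hd _ h p₁ (Sym2.mem_mk_right _ _)).2 hs.adj_p₁_p₂,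
      fun h => (far₃ d hd _ h p₃ (Sym2.mem_mk_left _ _)).1 rfl⟩)
    (fun d hd h _ _ _ _ _ => (far₁ d hd _ h (f v) (Sym2.mem_mk_left _ _)).1 rfl)
  have hfar : ∀ d ∈ N, ∀ x ∈ d, ¬G.Adj v x ∧ ¬G.Adj b x := by
    intro d hd x hx
    have hfx : f x ∈ d.map f := Sym2.mem_map.mpr ⟨x, hx, rfl⟩
    refine ⟨fun hvx => ?_, fun hbx => ?_⟩
    · by_cases hxB : x ∈ B
      · exact (far₃ _ (hNR d hd) _ hfx p₃ (Sym2.mem_mk_left _ _)).2 (hs.adj_p₃_apply hxB)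
      · exact (far₁ _ (hNR d hd) _ hfx (f v) (Sym2.mem_mk_left _ _)).2
          ((hs.adj_apply_iff v x).2 ⟨hvx, fun h => hxB h.2, fun h => hvx.ne' h.1⟩)
    · by_cases hxv : x = v
      · exact (far₁ _ (hNR d hd) _ hfx (f v) (Sym2.mem_mk_left _ _)).1 (hxv ▸ rfl)
      · exact (far₃ _ (hNR d hd) _ hfx (f b) (Sym2.mem_mk_right _ _)).2
          ((hs.adj_apply_iff b x).2 ⟨hbx, fun h => hs.ne_of_mem hb h.1, fun h => hxv h.1⟩)
  refine ⟨_, hN.insert (hs.adj_of_mem b hb) hfar, ?_⟩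
  have hne : s(p₃, f b) ≠ s(f v, p₁) := fun heq => by
    rcases Sym2.mem_iff.mp (heq ▸ Sym2.mem_mk_left p₃ (f b)) with h | h
    · exact hs.apply_ne_p₃ v h.symm
    · exact hs.ne_of_mem hb (hs.eq_of_adj_p₁_apply (h ▸ hs.adj_p₃_apply hb))
  have hR : R.card + 2 = M'.card := by
    rw [← Finset.card_erase_add_one h₁,
      ← Finset.card_erase_add_one (Finset.mem_erase.mpr ⟨hne, he₃⟩)]
  rw [IsInducedMatching.card_insert (hs.adj_of_mem b hb) hfar, hNcard]
  omega

theorem mem_p₁_or_mem_p₃ (hs : IsVertexStretch G G' f v B p₁ p₂ p₃)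
    (h' : G'.IsInducedMatching M') {e : Sym2 W} (he : e ∈ M') (h₂ : p₂ ∈ e) :
    p₁ ∈ e ∨ p₃ ∈ e := by
  obtain ⟨w, hw, rfl⟩ := h'.exists_adj_of_mem he h₂
  rcases (hs.adj_p₂_iff w).1 hw with rfl | rfl
  exacts [Or.inl (Sym2.mem_mk_right _ _), Or.inr (Sym2.mem_mk_right _ _)]

theorem eq_of_mem_p₁_of_mem_p₃ (hs : IsVertexStretch G G' f v B p₁ p₂ p₃)
    (h' : G'.IsInducedMatching M') (hno : ¬(s(f v, p₁) ∈ M' ∧ ∃ e ∈ M', p₃ ∈ e))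
    {d e : Sym2 W} (hd : d ∈ M') (he : e ∈ M') (h₁ : p₁ ∈ d) (h₃ : p₃ ∈ e) : d = e := by
  obtain ⟨w, hw, rfl⟩ := h'.exists_adj_of_mem hd h₁
  rcases (hs.adj_p₁_iff w).1 hw with rfl | rfl
  · exact (hno ⟨Sym2.eq_swap ▸ hd, e, he, h₃⟩).elim
  · exact h'.eq_of_adj hd he (Sym2.mem_mk_right _ _) h₃ hs.adj_p₂_p₃

theorem exists_card_le_add_one_of_mem_p₁_or_mem_p₃ (hs : IsVertexStretch G G' f v B p₁ p₂ p₃)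
    (h' : G'.IsInducedMatching M') (hno : ¬(s(f v, p₁) ∈ M' ∧ ∃ e ∈ M', p₃ ∈ e))
    {e : Sym2 W} (he : e ∈ M') (hpe : p₁ ∈ e ∨ p₃ ∈ e) :
    ∃ N : Finset (Sym2 V), G.IsInducedMatching N ∧ M'.card ≤ N.card + 1 := by
  classical
  have huniq : ∀ d ∈ M', p₁ ∈ d ∨ p₃ ∈ d → d = e := by
    intro d hd hpd
    rcases hpd with hd₁ | hd₃ <;> rcases hpe with he₁ | he₃
    · exact h'.eq_of_mem hd he hd₁ he₁
    · exact hs.eq_of_mem_p₁_of_mem_p₃ h' hno hd he hd₁ he₃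
    · exact (hs.eq_of_mem_p₁_of_mem_p₃ h' hno he hd he₁ hd₃).symm
    · exact h'.eq_of_mem hd he hd₃ he₃
  have hRM := Finset.erase_subset e M'
  have hne : ∀ d ∈ M'.erase e, d ≠ e := fun d hd => Finset.ne_of_mem_erase hd
  obtain ⟨N, hN, hNcard, -⟩ := hs.exists_card_eq_of_forall_not_mem (h'.subset hRM)
    (fun d hd => ⟨fun h => hne d hd (huniq d (hRM hd) (Or.inl h)),
      fun h => hne d hd (huniq d (hRM hd) (hs.mem_p₁_or_mem_p₃ h' (hRM hd) h)),
      fun h => hne d hd (huniq d (hRM hd) (Or.inr h))⟩)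
    (by
      intro d hd hvd d' hd' b hb hbd'
      rcases hpe with he₁ | he₃
      · exact hne d hd (h'.eq_of_adj (hRM hd) he hvd he₁ hs.adj_apply_p₁)
      · exact hne d' hd' (h'.eq_of_adj (hRM hd') he hbd' he₃ (hs.adj_p₃_apply hb).symm))
  exact ⟨N, hN, by rw [hNcard, Finset.card_erase_add_one he]⟩

theorem exists_card_le_add_one_of_forall_not_mem (hs : IsVertexStretch G G' f v B p₁ p₂ p₃)
    (h' : G'.IsInducedMatching M') (hP : ∀ e ∈ M', p₁ ∉ e ∧ p₂ ∉ e ∧ p₃ ∉ e) :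
    ∃ N : Finset (Sym2 V), G.IsInducedMatching N ∧ M'.card ≤ N.card + 1 := by
  classical
  by_cases hvB : ∃ e ∈ M', f v ∈ e ∧ ∃ e' ∈ M', ∃ b ∈ B, f b ∈ e'
  · obtain ⟨e, he, hve, -⟩ := hvB
    have hRM := Finset.erase_subset e M'
    obtain ⟨N, hN, hNcard, -⟩ := hs.exists_card_eq_of_forall_not_mem (h'.subset hRM)
      (fun d hd => hP d (hRM hd))
      (fun d hd hvd _ _ _ _ _ => Finset.ne_of_mem_erase hd (h'.eq_of_mem (hRM hd) he hvd hve))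
    exact ⟨N, hN, by rw [hNcard, Finset.card_erase_add_one he]⟩
  · obtain ⟨N, hN, hNcard, -⟩ := hs.exists_card_eq_of_forall_not_mem h' hP
      fun e he hve e' he' b hb hbe' => hvB ⟨e, he, hve, e', he', b, hb, hbe'⟩
    exact ⟨N, hN, by omega⟩

theorem exists_card_le_add_one (hs : IsVertexStretch G G' f v B p₁ p₂ p₃)
    (h' : G'.IsInducedMatching M') :
    ∃ N : Finset (Sym2 V), G.IsInducedMatching N ∧ M'.card ≤ N.card + 1 := by
  by_cases h₁₃ : s(f v, p₁) ∈ M' ∧ ∃ e ∈ M', p₃ ∈ e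
  · obtain ⟨h₁, e, he, h₃⟩ := h₁₃
    obtain ⟨b, hb, rfl⟩ := hs.exists_eq_mk_of_mem_p₃ h' h₁ he h₃
    exact hs.exists_card_le_add_one_of_mem_of_mem h' h₁ hb he
  by_cases hP : ∃ e ∈ M', p₁ ∈ e ∨ p₂ ∈ e ∨ p₃ ∈ e
  · obtain ⟨e, he, h₁ | h₂ | h₃⟩ := hP
    · exact hs.exists_card_le_add_one_of_mem_p₁_or_mem_p₃ h' h₁₃ he (Or.inl h₁)
    · exact hs.exists_card_le_add_one_of_mem_p₁_or_mem_p₃ h' h₁₃ he (hs.mem_p₁_or_mem_p₃ h' he h₂)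
    · exact hs.exists_card_le_add_one_of_mem_p₁_or_mem_p₃ h' h₁₃ he (Or.inr h₃)
  · exact hs.exists_card_le_add_one_of_forall_not_mem h' fun e he =>
      ⟨fun h => hP ⟨e, he, Or.inl h⟩, fun h => hP ⟨e, he, Or.inr (Or.inl h)⟩,
        fun h => hP ⟨e, he, Or.inr (Or.inr h)⟩⟩

theorem inducedMatchingNumber_eq (hs : IsVertexStretch G G' f v B p₁ p₂ p₃)
    (hG : G.edgeSet.Finite) (hG' : G'.edgeSet.Finite) :
    G'.inducedMatchingNumber = G.inducedMatchingNumber + 1 := by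
  apply le_antisymm
  · obtain ⟨M', hM', hcard'⟩ := exists_isInducedMatching_card_eq hG'
    obtain ⟨N, hN, hle⟩ := hs.exists_card_le_add_one hM'
    have := hN.card_le_inducedMatchingNumber hG
    omega
  · obtain ⟨M, hM, hcard⟩ := exists_isInducedMatching_card_eq hG
    obtain ⟨M', hM', hcard'⟩ := hs.exists_card_eq_add_one hM
    have := hM'.card_le_inducedMatchingNumber hG'
    omega

end IsVertexStretch

end SimpleGraph

/-- The edges of `dumbbell n l m` (for `n, m ≥ 3`, `l ≥ 1`) in closed form, stated without
truncated subtraction so that linear arithmetic can decide them. -/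
def dumbbellStep (n l m a b : ℕ) : Prop :=
  (b = a + 1 ∧ (b < n ∨ n ≤ a ∧ b + 3 ≤ n + l + m)) ∨
    (a = 0 ∧ (b + 1 = n ∨ b = n)) ∨
    (b + 3 = n + l + m ∧ (l = 1 ∧ a = 0 ∨ 2 ≤ l ∧ a + 2 = n + l))

section Dumbbell

variable {n l m : ℕ}

theorem zVert_zero (n : ℕ) : zVert n 0 = 0 := rfl

theorem zVert_succ (n k : ℕ) : zVert n (k + 1) = n + k := by
  simp only [zVert, Nat.add_one_ne_zero, if_false]; omega

theorem yVert_zero (hl : 1 ≤ l) : yVert n l 0 = if l = 1 then 0 else n + l - 2 := by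
  simp only [yVert, if_true, zVert]; split_ifs <;> omega

theorem yVert_of_ne_zero {j : ℕ} (hj : j ≠ 0) : yVert n l j = n + l - 2 + j := by
  simp only [yVert, hj, if_false]

theorem succ_mod_of_lt {i k : ℕ} (hi : i < k) :
    (i + 1) % k = if i + 1 = k then 0 else i + 1 := by
  split_ifs with h
  · rw [h, Nat.mod_self]
  · exact Nat.mod_eq_of_lt (by omega)

theorem dumbbellStep_of_rel (hn : 3 ≤ n) (hm : 3 ≤ m) (hl : 1 ≤ l) {a b : ℕ}
    (h : (∃ i < n, a = i ∧ b = (i + 1) % n) ∨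
      (∃ k, k + 1 < l ∧ a = zVert n k ∧ b = zVert n (k + 1)) ∨
      (∃ j < m, a = yVert n l j ∧ b = yVert n l ((j + 1) % m))) :
    dumbbellStep n l m a b ∨ dumbbellStep n l m b a := by
  unfold dumbbellStep
  rcases h with ⟨i, hi, ha, hb⟩ | ⟨_ | k, hk, ha, hb⟩ | ⟨_ | j, hj, ha, hb⟩
  · rw [succ_mod_of_lt hi] at hb; split_ifs at hb <;> omega
  · rw [zVert_zero] at ha; rw [zVert_succ] at hb; omega
  · rw [zVert_succ] at ha hb; omega
  · rw [Nat.mod_eq_of_lt (by omega : 0 + 1 < m), yVert_of_ne_zero (by omega)] at hb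
    rw [yVert_zero hl] at ha; split_ifs at ha <;> omega
  · rw [succ_mod_of_lt hj] at hb; rw [yVert_of_ne_zero (by omega)] at ha
    split_ifs at hb
    · rw [yVert_zero hl] at hb; split_ifs at hb <;> omega
    · rw [yVert_of_ne_zero (by omega)] at hb; omega

theorem rel_of_dumbbellStep (hn : 3 ≤ n) (hm : 3 ≤ m) (hl : 1 ≤ l) {a b : ℕ}
    (h : dumbbellStep n l m a b) :
    ((∃ i < n, a = i ∧ b = (i + 1) % n) ∨
      (∃ k, k + 1 < l ∧ a = zVert n k ∧ b = zVert n (k + 1)) ∨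
      (∃ j < m, a = yVert n l j ∧ b = yVert n l ((j + 1) % m))) ∨
    ((∃ i < n, b = i ∧ a = (i + 1) % n) ∨
      (∃ k, k + 1 < l ∧ b = zVert n k ∧ a = zVert n (k + 1)) ∨
      (∃ j < m, b = yVert n l j ∧ a = yVert n l ((j + 1) % m))) := by
  have hy₀ := yVert_zero (n := n) hl
  rcases h with ⟨rfl, hb | ⟨ha, hb⟩⟩ | ⟨rfl, hb | hb⟩ | ⟨hb, hy⟩
  · exact Or.inl (Or.inl ⟨a, by omega, rfl, (Nat.mod_eq_of_lt hb).symm⟩)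
  · by_cases hpath : a + 1 ≤ n + l - 2
    · refine Or.inl (Or.inr (Or.inl ⟨a - n + 1, by omega, ?_, ?_⟩)) <;>
        rw [zVert_succ] <;> omega
    · by_cases hj : a = n + l - 2
      · refine Or.inl (Or.inr (Or.inr ⟨0, by omega, ?_, ?_⟩))
        · split_ifs at hy₀ <;> omega
        · rw [Nat.mod_eq_of_lt (by omega : 0 + 1 < m), yVert_of_ne_zero (by omega)]; omega
      · refine Or.inl (Or.inr (Or.inr ⟨a - (n + l - 2), by omega, ?_, ?_⟩))
        · rw [yVert_of_ne_zero (by omega)]; omega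
        · rw [Nat.mod_eq_of_lt (by omega), yVert_of_ne_zero (by omega)]; omega
  · refine Or.inr (Or.inl ⟨b, by omega, rfl, ?_⟩)
    rw [hb, Nat.mod_self]
  · by_cases hl₁ : l = 1
    · refine Or.inl (Or.inr (Or.inr ⟨0, by omega, ?_, ?_⟩))
      · rw [hy₀, if_pos hl₁]
      · rw [Nat.mod_eq_of_lt (by omega : 0 + 1 < m), yVert_of_ne_zero (by omega)]; omega
    · exact Or.inl (Or.inr (Or.inl ⟨0, by omega, rfl, by rw [zVert_succ]; omega⟩))
  · refine Or.inr (Or.inr (Or.inr ⟨m - 1, by omega, ?_, ?_⟩))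
    · rw [yVert_of_ne_zero (by omega)]; omega
    · rw [Nat.sub_add_cancel (by omega), Nat.mod_self, hy₀]; split_ifs <;> omega

theorem dumbbell_adj_iff (hn : 3 ≤ n) (hm : 3 ≤ m) (hl : 1 ≤ l) {a b : ℕ} :
    (dumbbell n l m).Adj a b ↔ dumbbellStep n l m a b ∨ dumbbellStep n l m b a := by
  rw [dumbbell, fromRel_adj]
  constructor
  · rintro ⟨-, hab | hba⟩
    · exact dumbbellStep_of_rel hn hm hl hab
    · exact (dumbbellStep_of_rel hn hm hl hba).symm
  · intro h
    refine ⟨by unfold dumbbellStep at h; omega, ?_⟩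
    rcases h with hab | hba
    · exact rel_of_dumbbellStep hn hm hl hab
    · exact (rel_of_dumbbellStep hn hm hl hba).symm

theorem dumbbell_edgeSet_finite (hn : 3 ≤ n) (hm : 3 ≤ m) (hl : 1 ≤ l) :
    (dumbbell n l m).edgeSet.Finite := by
  refine (Finset.range (n + l + m)).sym2.finite_toSet.subset ?_
  rw [Finset.coe_sym2, edgeSet_subset_sym2_iff]
  intro a ha
  obtain ⟨b, hab⟩ := (dumbbell n l m).mem_support.mp ha
  rw [dumbbell_adj_iff hn hm hl] at hab
  unfold dumbbellStep at hab
  rw [Finset.coe_range, Set.mem_Iio]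
  omega

/-- Makes room for the three new path vertices `n, n + 1, n + 2`. -/
def shiftAbove (n a : ℕ) : ℕ := if a < n then a else a + 3

/-- `B` lists the neighbours of `0` away from `C_n`: `z₂ = n`, and also `y_m = n + m - 2` when
`l = 1`. -/
theorem dumbbell_isVertexStretch (hn : 3 ≤ n) (hm : 3 ≤ m) (hl : 1 ≤ l) :
    (dumbbell n l m).IsVertexStretch (dumbbell n (l + 3) m) (shiftAbove n) 0
      {b | b = n ∨ l = 1 ∧ b + 2 = n + m} n (n + 1) (n + 2) where
  injective a b h := by unfold shiftAbove at h; split_ifs at h <;> omega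
  apply_ne_p₁ a := by unfold shiftAbove; split_ifs <;> omega
  apply_ne_p₂ a := by unfold shiftAbove; split_ifs <;> omega
  apply_ne_p₃ a := by unfold shiftAbove; split_ifs <;> omega
  mem_range w h₁ h₂ h₃ := ⟨if w < n then w else w - 3, by unfold shiftAbove; split_ifs <;> omega⟩
  adj_of_mem b hb := by
    rw [Set.mem_ofPred_eq] at hb
    rw [dumbbell_adj_iff hn hm hl]; unfold dumbbellStep; omega
  adj_apply_iff a b := by
    rw [dumbbell_adj_iff hn hm (by omega), dumbbell_adj_iff hn hm hl, Set.mem_ofPred_eq,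
      Set.mem_ofPred_eq]
    unfold shiftAbove
    constructor
    · rintro (h | h) <;> unfold dumbbellStep at h ⊢ <;> split_ifs at h ⊢ <;> lia
    · rintro ⟨h | h, h₁, h₂⟩ <;> unfold dumbbellStep at h ⊢ <;> split_ifs <;> lia
  adj_p₁_iff w := by
    rw [dumbbell_adj_iff hn hm (by omega)]; unfold dumbbellStep shiftAbove; split_ifs <;> omega
  adj_p₂_iff w := by
    rw [dumbbell_adj_iff hn hm (by omega)]; unfold dumbbellStep; omega
  adj_p₃_iff w := by
    rw [dumbbell_adj_iff hn hm (by omega)]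
    constructor
    · intro h
      unfold dumbbellStep at h
      by_cases hw : w = n + 1
      · exact Or.inl hw
      · refine Or.inr ⟨w - 3, ?_, ?_⟩
        · rw [Set.mem_ofPred_eq]; omega
        · unfold shiftAbove; split_ifs <;> omega
    · rintro (rfl | ⟨b, hb, rfl⟩)
      · unfold dumbbellStep; omega
      · rw [Set.mem_ofPred_eq] at hb
        unfold dumbbellStep shiftAbove; split_ifs <;> omega

end Dumbbell

/-- For `n, m ≥ 3` and `l ≥ 1`, `ν(C_n · P_{l+3} · C_m) = ν(C_n · P_l · C_m) + 1`. -/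
theorem inducedMatchingNumber_dumbbell_add_three (n m l : ℕ)
    (hn : 3 ≤ n) (hm : 3 ≤ m) (hl : 1 ≤ l) :
    (dumbbell n (l + 3) m).inducedMatchingNumber =
      (dumbbell n l m).inducedMatchingNumber + 1 :=
  (dumbbell_isVertexStretch hn hm hl).inducedMatchingNumber_eq
    (dumbbell_edgeSet_finite hn hm hl) (dumbbell_edgeSet_finite hn hm (by omega))
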